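/- arXiv:1009.1106 — 6 statements merged into one kernel-verified Lean document; each statement's English description precedes it below -/
import Mathlib

section
/- For every integer n ≥ 3, the Bernoulli numbers satisfy ∑_{j=2}^{n-2} B_{n-j}/(2^{j+1}·(j+2)!·(n-j)!) + B_{n-1}/(24·(n-1)!) + B_n/(4·n!) + B_{n+1}/(n+1)! + (B_{n+2}/(n+2)!)·(4 − 1/2^n) = (n+1)/(2^{n+1}·(n+2)!). -/
/-!
Since `(eˣ + 1)(eˣ - 1) = e²ˣ - 1`, the generating function `B(x) = x / (eˣ - 1)` satisfies
`B(2x)(eˣ + 1) = 2 B(x)`. Comparing coefficients of `x^(n+2)` gives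
`∑_{k=0}^{n+2} 2^k B_k / (k! (n+2-k)!) = (2 - 2^(n+2)) B_{n+2} / (n+2)!`.
After dividing by `2^(n+1)` and substituting `k = n - j`, the terms `2 ≤ k ≤ n - 2` form the sum
in the statement, the terms `k = n - 1, n, n + 1` are the next three summands, the term
`k = n + 2` and the right-hand side give the last summand, and the terms `k = 0, 1`
(`B_0 = 1`, `B_1 = -1/2`) give the right-hand side of the statement.
-/

open Finset PowerSeries
open scoped Nat

theorem PowerSeries.exp_sub_one_ne_zero (A : Type*) [CommRing A] [Algebra ℚ A] [Nontrivial A] :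
    exp A - 1 ≠ 0 := fun h => by
  simpa [coeff_exp] using congrArg (coeff 1) h

theorem rescale_two_bernoulliPowerSeries_mul_exp_add_one :
    rescale (2 : ℚ) (bernoulliPowerSeries ℚ) * (exp ℚ + 1) = 2 * bernoulliPowerSeries ℚ := by
  refine mul_right_cancel₀ (exp_sub_one_ne_zero ℚ) ?_
  have hexp : rescale (2 : ℚ) (exp ℚ) = exp ℚ ^ 2 := by
    exact_mod_cast (exp_pow_eq_rescale_exp (A := ℚ) 2).symm
  calc rescale 2 (bernoulliPowerSeries ℚ) * (exp ℚ + 1) * (exp ℚ - 1)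
      = rescale 2 (bernoulliPowerSeries ℚ * (exp ℚ - 1)) := by
        rw [map_mul, map_sub, hexp, map_one]; ring
    _ = 2 * (bernoulliPowerSeries ℚ * (exp ℚ - 1)) := by
        rw [bernoulliPowerSeries_mul_exp_sub_one, rescale_X, map_ofNat]
    _ = 2 * bernoulliPowerSeries ℚ * (exp ℚ - 1) := by ring

theorem sum_range_two_pow_mul_bernoulli_div (m : ℕ) :
    ∑ k ∈ range (m + 1), 2 ^ k * bernoulli k / (k ! * (m - k)! : ℚ)
      = (2 - 2 ^ m) * bernoulli m / m ! := by
  have h := congrArg (coeff m) rescale_two_bernoulliPowerSeries_mul_exp_add_one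
  rw [mul_add, mul_one, map_add, coeff_mul, Nat.sum_antidiagonal_eq_sum_range_succ_mk] at h
  simp only [coeff_rescale, bernoulliPowerSeries, coeff_mk, coeff_exp, Algebra.algebraMap_self,
    RingHom.id_apply, ← map_ofNat (C (R := ℚ)), coeff_C_mul] at h
  rw [sub_mul, sub_div, mul_div_assoc, ← h, mul_div_assoc, add_sub_cancel_right]
  simp only [mul_one_div, mul_div_assoc, div_div]

theorem sum_Icc_bernoulli_div_eq_sum_Ico_div_two_pow {n : ℕ} (hn : 2 ≤ n) :
    ∑ j ∈ Icc 2 (n - 2), bernoulli (n - j) / ((2 : ℚ) ^ (j + 1) * (j + 2)! * (n - j)!)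
      = (∑ k ∈ Ico 2 (n - 1), 2 ^ k * bernoulli k / (k ! * (n + 2 - k)! : ℚ)) / 2 ^ (n + 1) := by
  have hreflect := sum_Ico_reflect (fun k ↦ 2 ^ k * bernoulli k / (k ! * (n + 2 - k)! : ℚ)) 2
    (show n - 1 ≤ n + 1 by omega)
  rw [show n + 1 - (n - 1) = 2 by omega, show n + 1 - 2 = n - 1 by omega] at hreflect
  rw [← hreflect, sum_div, ← Ico_add_one_right_eq_Icc, show n - 2 + 1 = n - 1 by omega]
  refine sum_congr rfl fun j hj ↦ ?_
  have hj : j ≤ n := by grind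
  have hpow : (2 : ℚ) ^ (n + 1) = 2 ^ (n - j) * 2 ^ (j + 1) := by rw [← pow_add]; congr 1; omega
  rw [show n + 2 - (n - j) = j + 2 by omega, hpow]
  field_simp

/-- For every integer `n ≥ 3`,
`∑_{j=2}^{n-2} B_{n-j}/(2^{j+1}·(j+2)!·(n-j)!) + B_{n-1}/(24·(n-1)!) + B_n/(4·n!)
  + B_{n+1}/(n+1)! + (B_{n+2}/(n+2)!)·(4 − 1/2^n) = (n+1)/(2^{n+1}·(n+2)!)`. -/
theorem stmt_1 (n : ℕ) (hn : 3 ≤ n) :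
    ∑ j ∈ Finset.Icc 2 (n - 2),
        bernoulli (n - j) / ((2 : ℚ) ^ (j + 1) * (j + 2).factorial * (n - j).factorial)
      + bernoulli (n - 1) / (24 * ((n - 1).factorial : ℚ))
      + bernoulli n / (4 * (n.factorial : ℚ))
      + bernoulli (n + 1) / ((n + 1).factorial : ℚ)
      + bernoulli (n + 2) / ((n + 2).factorial : ℚ) * (4 - 1 / (2 : ℚ) ^ n)
    = ((n : ℚ) + 1) / ((2 : ℚ) ^ (n + 1) * ((n + 2).factorial : ℚ)) := by
  have hsum := sum_range_two_pow_mul_bernoulli_div (n + 2)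
  obtain ⟨p, rfl⟩ : ∃ p, n = p + 3 := ⟨n - 3, by omega⟩
  rw [show p + 3 + 2 + 1 = p + 2 + 1 + 1 + 1 + 1 by rfl] at hsum
  rw [sum_range_succ, sum_range_succ, sum_range_succ, sum_range_succ, range_eq_Ico,
    sum_eq_sum_Ico_succ_bot (by omega), sum_eq_sum_Ico_succ_bot (by omega)] at hsum
  rw [sum_Icc_bernoulli_div_eq_sum_Ico_div_two_pow (by omega)]
  norm_num [add_assoc, Nat.add_sub_add_left, Nat.factorial_succ] at hsum ⊢
  linear_combination (norm := skip) hsum / 2 ^ (p + 4)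
  field_simp
  ring
end

section
/- For every integer n ≥ 0, ∑_{j=0}^{n} B_{n-j}/(2^{j+1}·(j+2)!·(n-j)!) + B_{n+1}/(n+1)! + (B_{n+2}/(n+2)!)·(4 − 1/2^n) = 0. -/
/-!
Writing `E = e^{x/2}`, the Bernoulli series is `B(x) = x/((E - 1)(E + 1))` while
`B(x/2) = (x/2)/(E - 1)`; hence the duplication formula `2 B(x/2) = B(x) (E + 1)`.
The identity is twice its coefficient of `x^{n+2}`: the terms of `E` of degree `0` and `1`
contribute `B_{n+2}/(n+2)!` and `B_{n+1}/(2 (n+1)!)`, those of degree `≥ 2` half the sum,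
and the left side is `2^{-(n+1)} B_{n+2}/(n+2)!`.
-/

open Finset PowerSeries

namespace PowerSeries

variable {A : Type*}

theorem coeff_add_two_mul [CommSemiring A] (φ ψ : A⟦X⟧) (n : ℕ) :
    coeff (n + 2) (φ * ψ) = coeff (n + 2) φ * coeff 0 ψ + coeff (n + 1) φ * coeff 1 ψ
      + ∑ j ∈ range (n + 1), coeff (n - j) φ * coeff (j + 2) ψ := by
  rw [coeff_mul, Nat.sum_antidiagonal_succ', Nat.sum_antidiagonal_succ', ← add_assoc,
    ← Nat.sum_antidiagonal_swap, Nat.sum_antidiagonal_eq_sum_range_succ_mk]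
  rfl

variable [Field A] [CharZero A]

theorem rescale_half_exp_mul_self :
    rescale (2⁻¹ : A) (exp A) * rescale 2⁻¹ (exp A) = exp A := by
  rw [exp_mul_exp_eq_exp_add]
  norm_num

theorem two_mul_rescale_half_bernoulliPowerSeries :
    2 * rescale (2⁻¹ : A) (bernoulliPowerSeries A) =
      bernoulliPowerSeries A * (rescale 2⁻¹ (exp A) + 1) := by
  set E := rescale (2⁻¹ : A) (exp A)
  have hB : bernoulliPowerSeries A * ((E - 1) * (E + 1)) = X := by
    rw [← bernoulliPowerSeries_mul_exp_sub_one, ← rescale_half_exp_mul_self]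
    ring
  have hB₂ : rescale (2⁻¹ : A) (bernoulliPowerSeries A) * (E - 1) = C 2⁻¹ * X := by
    simpa using congrArg (rescale (2⁻¹ : A)) (bernoulliPowerSeries_mul_exp_sub_one A)
  have hE : E - 1 ≠ 0 := fun h ↦ X_ne_zero (by rw [← hB, h, zero_mul, mul_zero])
  refine mul_right_cancel₀ hE ?_
  rw [mul_assoc, hB₂, mul_assoc, mul_comm (E + 1), hB, ← mul_assoc, ← map_ofNat C, ← map_mul]
  norm_num

end PowerSeries

/-- For every integer `n ≥ 0`,
`∑_{j=0}^{n} B_{n-j}/(2^{j+1}·(j+2)!·(n-j)!) + B_{n+1}/(n+1)!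
  + (B_{n+2}/(n+2)!)·(4 − 1/2^n) = 0`. -/
theorem stmt_2 (n : ℕ) :
    ∑ j ∈ Finset.range (n + 1),
        bernoulli (n - j) / ((2 : ℚ) ^ (j + 1) * (j + 2).factorial * (n - j).factorial)
      + bernoulli (n + 1) / ((n + 1).factorial : ℚ)
      + bernoulli (n + 2) / ((n + 2).factorial : ℚ) * (4 - 1 / (2 : ℚ) ^ n)
    = 0 := by
  have h := congrArg (coeff (n + 2)) (two_mul_rescale_half_bernoulliPowerSeries (A := ℚ))
  rw [mul_add, mul_one, map_add, coeff_add_two_mul (bernoulliPowerSeries _),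
    show (2 : ℚ⟦X⟧) = C 2 from (map_ofNat C 2).symm, coeff_C_mul] at h
  simp only [bernoulliPowerSeries, coeff_mk, coeff_rescale, coeff_exp, map_div₀, map_inv₀,
    map_natCast, eq_ratCast, Rat.cast_eq_id, id_eq, Rat.cast_one, inv_pow, one_div, pow_zero,
    pow_one, Nat.factorial_zero, Nat.factorial_one, Nat.cast_one, div_one, mul_one] at h
  have hsum : ∑ j ∈ range (n + 1), bernoulli (n - j) / (n - j).factorial *
        ((2 ^ (j + 2) : ℚ)⁻¹ * ((j + 2).factorial : ℚ)⁻¹) =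
      2⁻¹ * ∑ j ∈ range (n + 1),
        bernoulli (n - j) / ((2 : ℚ) ^ (j + 1) * (j + 2).factorial * (n - j).factorial) := by
    rw [mul_sum]
    refine sum_congr rfl fun j _ ↦ ?_
    field_simp
    ring
  rw [hsum] at h
  linear_combination (-2) * h
end

section
/- Define rational numbers β_n for n ≥ 2 by the recurrence β_n = −∑_{j=2}^{n-1} β_j/(n−j+1)! + 1/(n+1)! − 1/(2^n·n!). Then for all n ≥ 2, β_n = (B_n/n!)·(1 − 1/2^{n−1}), where B_n is the n-th Bernoulli number. -/
/-!
The closed form `γ n = B_n / n! * (1 - 1 / 2 ^ (n - 1))` satisfies the same recurrence as `β`,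
and the recurrence determines `β n` from the earlier values, so `β = γ` by strong induction.
After clearing the factorials, the recurrence for `γ` reduces to the two Bernoulli identities
`∑_{j ≤ n} C(n+1, j) B_j = 0` and `∑_{j ≤ n} C(n+1, j) B_j 2^(n+1-j) = n + 1`,
the latter being Faulhaber's formula for `0^n + 1^n`.
-/

open Finset Nat

theorem sum_range_succ_eq_add_add_sum_Icc_two {M : Type*} [AddCommMonoid M] (f : ℕ → M)
    {n : ℕ} (hn : 1 ≤ n) :
    ∑ j ∈ range (n + 1), f j = f 0 + f 1 + ∑ j ∈ Icc 2 n, f j := by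
  have h : range (n + 1) = insert 0 (insert 1 (Icc 2 n)) := by
    ext x; simp only [mem_range, mem_insert, mem_Icc]; omega
  rw [h, sum_insert (by simp), sum_insert (by simp), add_assoc]

theorem sum_Icc_two_choose_mul_bernoulli {n : ℕ} (hn : 1 ≤ n) :
    ∑ j ∈ Icc 2 n, ((n + 1).choose j : ℚ) * bernoulli j = (n + 1) / 2 - 1 := by
  have h := sum_bernoulli (n + 1)
  rw [if_neg (by omega), sum_range_succ_eq_add_add_sum_Icc_two _ hn] at h
  simp only [choose_zero_right, choose_one_right, bernoulli_zero, bernoulli_one] at h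
  push_cast at h
  linarith

theorem sum_Icc_two_bernoulli_mul_choose_mul_two_pow {n : ℕ} (hn : 1 ≤ n) :
    ∑ j ∈ Icc 2 n, bernoulli j * (n + 1).choose j * (2 : ℚ) ^ (n + 1 - j)
      = n + 1 - 2 ^ (n + 1) + (n + 1) * 2 ^ n / 2 := by
  have h := sum_range_pow 2 n
  rw [← sum_div, eq_div_iff (by positivity), sum_range_succ_eq_add_add_sum_Icc_two _ hn] at h
  simp only [sum_range_succ, sum_range_zero, choose_zero_right, choose_one_right, bernoulli_zero,
    bernoulli_one, Nat.add_sub_cancel] at h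
  push_cast at h
  rw [zero_pow (by omega), one_pow] at h
  linarith

theorem sum_Icc_two_bernoulli_div_factorial_mul_div_factorial {n : ℕ} (hn : 1 ≤ n) :
    ∑ j ∈ Icc 2 n, bernoulli j / j ! * (1 - 1 / (2 : ℚ) ^ (j - 1)) / ((n - j + 1)! : ℚ)
      = 1 / ((n + 1)! : ℚ) - 1 / (2 ^ n * n !) := by
  have hterm : ∀ j ∈ Icc 2 n,
      bernoulli j / j ! * (1 - 1 / (2 : ℚ) ^ (j - 1)) / ((n - j + 1)! : ℚ)
        = ((n + 1).choose j * bernoulli j * 2 ^ n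
            - bernoulli j * (n + 1).choose j * 2 ^ (n + 1 - j)) / (2 ^ n * (n + 1)!) := by
    intro j hj
    rw [mem_Icc] at hj
    have hfac : ((n + 1).choose j : ℚ) * j ! * ((n - j + 1)! : ℚ) = (n + 1)! := by
      rw [show n - j + 1 = n + 1 - j by omega]
      exact_mod_cast choose_mul_factorial_mul_factorial (by omega : j ≤ n + 1)
    have hpow : (2 : ℚ) ^ (n + 1 - j) * 2 ^ (j - 1) = 2 ^ n := by
      rw [← pow_add]; congr 1; omega
    field_simp
    linear_combination (-(bernoulli j * 2 ^ n * (2 ^ (j - 1) - 1))) * hfac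
      + (bernoulli j * (n + 1).choose j * j ! * (n - j + 1)!) * hpow
  rw [sum_congr rfl hterm, ← sum_div, sum_sub_distrib, ← sum_mul,
    sum_Icc_two_choose_mul_bernoulli hn, sum_Icc_two_bernoulli_mul_choose_mul_two_pow hn,
    factorial_succ]
  push_cast
  field_simp
  ring

/-- If `β : ℕ → ℚ` satisfies, for all `n ≥ 2`,
`β n = −∑_{j=2}^{n-1} β j/(n−j+1)! + 1/(n+1)! − 1/(2^n·n!)`,
then `β n = (B_n/n!)·(1 − 1/2^{n−1})` for all `n ≥ 2`. -/
theorem stmt_4 (β : ℕ → ℚ)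
    (hβ : ∀ n, 2 ≤ n →
      β n = -∑ j ∈ Finset.Icc 2 (n - 1), β j / ((n - j + 1).factorial : ℚ)
        + 1 / ((n + 1).factorial : ℚ) - 1 / ((2 : ℚ) ^ n * (n.factorial : ℚ))) :
    ∀ n, 2 ≤ n → β n = bernoulli n / (n.factorial : ℚ) * (1 - 1 / (2 : ℚ) ^ (n - 1)) := by
  intro n
  induction n using Nat.strong_induction_on with
  | _ n ih =>
    intro hn
    obtain ⟨m, rfl⟩ : ∃ m, n = m + 1 := ⟨n - 1, by omega⟩
    have hconv := sum_Icc_two_bernoulli_div_factorial_mul_div_factorial (n := m + 1) (by omega)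
    rw [sum_Icc_succ_top (by omega), Nat.sub_self, zero_add, factorial_one, Nat.cast_one,
      div_one, Nat.add_sub_cancel] at hconv
    rw [hβ _ hn, Nat.add_sub_cancel,
      sum_congr rfl fun j hj => by
        obtain ⟨h2j, hjm⟩ := mem_Icc.1 hj
        rw [ih j (by omega) h2j]]
    linarith
end

section
/- Define rational numbers b_n and b̃_n for n ≥ 2 by the recurrences b_n = ∑_{j=2}^{n-1} (−1)^{n−j+1} b_j/(n−j+1)! + (−1)^n/(n+1)! and b̃_n = ∑_{j=2}^{n-1} (−1)^{n−j+1} b̃_j/(n−j+1)! + (−1)^n/(2^n·n!). Then b_{2l+1} = b̃_{2l+1} for every l ≥ 1. -/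
/-!
Put `e = b - b̃` and `E(x) = ∑_{n ≥ 2} eₙ xⁿ`. Subtracting the two recurrences gives
`E(x) φ(x) = φ(x) - e^{-x/2}` with `φ(x) = (1 - e^{-x}) / x`. Since `φ(-x) = eˣ φ(x)` and
`e^{x/2} = eˣ e^{-x/2}`, the series `E(-x)` satisfies the same equation, and `φ` is invertible,
so `E` is even: its odd coefficients `e_{2l+1}` vanish.
-/

open PowerSeries Finset Nat

theorem PowerSeries.coeff_rescale_exp (a : ℚ) (n : ℕ) :
    coeff n (rescale a (exp ℚ)) = a ^ n / n ! := by
  rw [coeff_rescale, coeff_exp, Algebra.algebraMap_self, RingHom.id_apply, mul_one_div]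

theorem PowerSeries.coeff_eq_zero_of_rescale_neg_one_eq {R : Type*} [CommRing R]
    [NoZeroDivisors R] [CharZero R] {f : R⟦X⟧} (hf : rescale (-1) f = f) {n : ℕ}
    (hn : Odd n) : coeff n f = 0 := by
  have h := congrArg (coeff n) hf
  rw [coeff_rescale, hn.neg_one_pow, neg_one_mul, neg_eq_iff_add_eq_zero, ← two_mul] at h
  exact (mul_eq_zero.mp h).resolve_left two_ne_zero

noncomputable def oneSubExpNegDivX : ℚ⟦X⟧ := mk fun m => (-1 : ℚ) ^ m / (m + 1)!

theorem X_mul_oneSubExpNegDivX : X * oneSubExpNegDivX = 1 - rescale (-1) (exp ℚ) := by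
  ext n
  rw [map_sub, coeff_rescale_exp, coeff_one]
  cases n with
  | zero => simp
  | succ m => simp [coeff_succ_X_mul, oneSubExpNegDivX, pow_succ, neg_div]

theorem isUnit_oneSubExpNegDivX : IsUnit oneSubExpNegDivX := by
  simp [isUnit_iff_constantCoeff, oneSubExpNegDivX, ← coeff_zero_eq_constantCoeff_apply]

theorem rescale_neg_one_oneSubExpNegDivX :
    rescale (-1) oneSubExpNegDivX = oneSubExpNegDivX * exp ℚ := by
  have h := congrArg (rescale (-1 : ℚ)) X_mul_oneSubExpNegDivX
  rw [map_mul, rescale_neg_one_X, map_sub, map_one, rescale_rescale, neg_one_mul, neg_neg,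
    rescale_one, RingHom.id_apply] at h
  have hexp : rescale (-1) (exp ℚ) * exp ℚ = 1 := by
    rw [mul_comm]
    exact exp_mul_exp_neg_eq_one
  apply mul_left_cancel₀ (X_ne_zero (R := ℚ))
  rw [← mul_assoc, X_mul_oneSubExpNegDivX]
  linear_combination -h + hexp

theorem coeff_mk_mul_oneSubExpNegDivX (e : ℕ → ℚ) (n : ℕ) :
    coeff n (mk (fun k => if 2 ≤ k then e k else 0) * oneSubExpNegDivX)
      = ∑ j ∈ Icc 2 n, e j * ((-1 : ℚ) ^ (n - j) / (n - j + 1)!) := by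
  rw [coeff_mul, Nat.sum_antidiagonal_eq_sum_range_succ_mk]
  simp only [oneSubExpNegDivX, coeff_mk, ite_mul, zero_mul]
  rw [← sum_filter]
  congr 1
  ext k
  simp [and_comm]

theorem mk_mul_oneSubExpNegDivX_eq {e : ℕ → ℚ} {f : ℚ⟦X⟧} (h₀ : coeff 0 f = 0)
    (h₁ : coeff 1 f = 0) (he : ∀ n, 2 ≤ n →
      e n = ∑ j ∈ Icc 2 (n - 1), (-1 : ℚ) ^ (n - j + 1) * e j / (n - j + 1)! + coeff n f) :
    mk (fun k => if 2 ≤ k then e k else 0) * oneSubExpNegDivX = f := by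
  ext n
  rw [coeff_mk_mul_oneSubExpNegDivX]
  rcases lt_or_ge n 2 with hn | hn
  · interval_cases n <;> simp [h₀, h₁]
  · obtain ⟨m, rfl⟩ : ∃ m, n = m + 1 := ⟨n - 1, by omega⟩
    rw [sum_Icc_succ_top (by omega), Nat.sub_self, eq_sub_of_add_eq' (he (m + 1) hn).symm,
      Nat.add_sub_cancel]
    simp only [pow_zero, zero_add, factorial_one, cast_one, div_one, mul_one]
    rw [sub_eq_neg_add, ← sum_neg_distrib]
    congr 1
    exact sum_congr rfl fun j _ => by ring

theorem rescale_neg_one_eq_self_of_mul_oneSubExpNegDivX {E : ℚ⟦X⟧}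
    (h : E * oneSubExpNegDivX = oneSubExpNegDivX - rescale (-1 / 2) (exp ℚ)) :
    rescale (-1) E = E := by
  have hhalf : rescale (-1 / 2) (exp ℚ) * exp ℚ = rescale (1 / 2) (exp ℚ) := by
    rw [show (1 / 2 : ℚ) = -1 / 2 + 1 by norm_num, ← exp_mul_exp_eq_exp_add, rescale_one,
      RingHom.id_apply]
  refine (isUnit_oneSubExpNegDivX.mul (isUnit_exp ℚ)).mul_right_cancel ?_
  calc rescale (-1) E * (oneSubExpNegDivX * exp ℚ)
      = rescale (-1) (E * oneSubExpNegDivX) := by rw [map_mul, rescale_neg_one_oneSubExpNegDivX]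
    _ = oneSubExpNegDivX * exp ℚ - rescale (1 / 2) (exp ℚ) := by
      rw [h, map_sub, rescale_neg_one_oneSubExpNegDivX, rescale_rescale]
      norm_num
    _ = E * (oneSubExpNegDivX * exp ℚ) := by rw [← mul_assoc, h, sub_mul, hhalf]

/-- If `b, b̃ : ℕ → ℚ` satisfy, for all `n ≥ 2`,
`b n = ∑_{j=2}^{n-1} (−1)^{n−j+1} b j/(n−j+1)! + (−1)^n/(n+1)!` and
`b̃ n = ∑_{j=2}^{n-1} (−1)^{n−j+1} b̃ j/(n−j+1)! + (−1)^n/(2^n·n!)`,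
then `b (2l+1) = b̃ (2l+1)` for every `l ≥ 1`. -/
theorem stmt_8 (b bt : ℕ → ℚ)
    (hb : ∀ n, 2 ≤ n →
      b n = ∑ j ∈ Finset.Icc 2 (n - 1),
          (-1 : ℚ) ^ (n - j + 1) * b j / ((n - j + 1).factorial : ℚ)
        + (-1 : ℚ) ^ n / ((n + 1).factorial : ℚ))
    (hbt : ∀ n, 2 ≤ n →
      bt n = ∑ j ∈ Finset.Icc 2 (n - 1),
          (-1 : ℚ) ^ (n - j + 1) * bt j / ((n - j + 1).factorial : ℚ)
        + (-1 : ℚ) ^ n / ((2 : ℚ) ^ n * (n.factorial : ℚ))) :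
    ∀ l : ℕ, 1 ≤ l → b (2 * l + 1) = bt (2 * l + 1) := by
  intro l hl
  set E : ℚ⟦X⟧ := mk fun k => if 2 ≤ k then b k - bt k else 0 with hE_def
  have hE : E * oneSubExpNegDivX = oneSubExpNegDivX - rescale (-1 / 2) (exp ℚ) := by
    refine mk_mul_oneSubExpNegDivX_eq (by rw [map_sub, coeff_rescale_exp]; simp [oneSubExpNegDivX])
      (by rw [map_sub, coeff_rescale_exp]; norm_num [oneSubExpNegDivX]) fun n hn => ?_
    simp only [mul_sub, sub_div, sum_sub_distrib]
    rw [hb n hn, hbt n hn, map_sub, coeff_rescale_exp, oneSubExpNegDivX, coeff_mk, div_pow]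
    ring
  have h := coeff_eq_zero_of_rescale_neg_one_eq
    (rescale_neg_one_eq_self_of_mul_oneSubExpNegDivX hE) (odd_two_mul_add_one l)
  rwa [hE_def, coeff_mk, if_pos (by omega), sub_eq_zero] at h
end

section
/- Define rational numbers α_{n,t} for n ≥ 2 and 1 ≤ t ≤ n−1 by the recurrence α_{n,t} = −∑_{(i,j)≠(0,0), 0≤i≤t−1, 0≤j≤n−t−1} α_{n−i−j, t−i}/((i+1)!·(j+1)!) + 1/((t+1)!·(n−t+1)!) − 1/(n+1)!. Then α_{n,t} = B_n/n! for all such n and t; in particular α_{n,t} is independent of t. -/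
/-!
Write `β m = B_m / m!` and `ε k = 1 / (k+1)!`, the coefficients of `x / (eˣ - 1)` and
`(eˣ - 1) / x`. Their product is `1`, so `∑_{j ≤ m} β (m - j) ε j` vanishes for `m ≥ 1`.
From this, for all `a b`,
`∑_{i < a, j < b} β (a + b - i - j) ε i ε j = ε a ε b - ε (a + b)`:
passing from `(a, b + 1)` to `(a + 1, b)` adds a row and removes a column, and each of these is
a truncated convolution evaluated by the previous identity.
Now `α n t = β n` by strong induction on `n`: once `α` is replaced by `β` on the right of the
recurrence, the double sum is the one above with `a = t`, `b = n - t`, minus its `(0, 0)` term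
`β n`, and everything else cancels.
-/

open Finset Nat PowerSeries

def bernoulliCoeff (m : ℕ) : ℚ := bernoulli m / m !

def expSubOneDivXCoeff (k : ℕ) : ℚ := 1 / (k + 1)!

local notation "β" => bernoulliCoeff
local notation "ε" => expSubOneDivXCoeff

lemma mk_expSubOneDivXCoeff_mul_X : mk ε * X = exp ℚ - 1 := by
  ext (_ | n) <;> simp [expSubOneDivXCoeff, coeff_succ_mul_X]

lemma mk_expSubOneDivXCoeff_mul_bernoulliPowerSeries : mk ε * bernoulliPowerSeries ℚ = 1 := by
  refine mul_right_cancel₀ (X_ne_zero (R := ℚ)) ?_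
  rw [mul_right_comm, mk_expSubOneDivXCoeff_mul_X, mul_comm, bernoulliPowerSeries_mul_exp_sub_one,
    one_mul]

lemma sum_range_bernoulliCoeff_mul (m : ℕ) :
    ∑ j ∈ range (m + 1), β (m - j) * ε j = if m = 0 then 1 else 0 := by
  have h := congr_arg (coeff m) mk_expSubOneDivXCoeff_mul_bernoulliPowerSeries
  rw [coeff_mul, Nat.sum_antidiagonal_eq_sum_range_succ
    (fun j k => coeff j (mk ε) * coeff k (bernoulliPowerSeries ℚ))] at h
  simpa [bernoulliPowerSeries, bernoulliCoeff, coeff_one, mul_comm] using h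

lemma sum_range_bernoulliCoeff_succ_sub_mul (m : ℕ) :
    ∑ j ∈ range m, β (m + 1 - j) * ε j = ε m / 2 - ε (m + 1) := by
  have h := sum_range_bernoulliCoeff_mul (m + 1)
  rw [sum_range_succ, sum_range_succ, if_neg m.succ_ne_zero, Nat.sub_self,
    Nat.add_sub_cancel_left] at h
  have hβ1 : β 1 = -1 / 2 := by simp [bernoulliCoeff]
  have hβ0 : β 0 = 1 := by simp [bernoulliCoeff]
  rw [hβ1, hβ0] at h
  linarith

lemma sum_range_sum_range_bernoulliCoeff_mul (a b : ℕ) :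
    ∑ i ∈ range a, ∑ j ∈ range b, β (a + b - i - j) * ε i * ε j =
      ε a * ε b - ε (a + b) := by
  induction a generalizing b with
  | zero => simp [expSubOneDivXCoeff]
  | succ a ih =>
    have row : ∑ j ∈ range b, β (a + 1 + b - a - j) * ε a * ε j =
        ε a * (ε b / 2 - ε (b + 1)) := by
      rw [← sum_range_bernoulliCoeff_succ_sub_mul, mul_sum]
      refine sum_congr rfl fun j _ => ?_
      rw [show a + 1 + b - a - j = b + 1 - j by omega]
      ring
    have col : ∑ i ∈ range a, β (a + (b + 1) - i - b) * ε i * ε b =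
        ε b * (ε a / 2 - ε (a + 1)) := by
      rw [← sum_range_bernoulliCoeff_succ_sub_mul, mul_sum]
      refine sum_congr rfl fun i _ => ?_
      rw [show a + (b + 1) - i - b = a + 1 - i by omega]
      ring
    have shift := ih (b + 1)
    rw [sum_congr rfl fun i _ => sum_range_succ _ b, sum_add_distrib, col] at shift
    rw [sum_range_succ, row, show a + 1 + b = a + (b + 1) by ring]
    linear_combination shift

lemma sum_range_sum_range_ite_add_eq_zero {M : Type*} [AddCommGroup M] (g : ℕ → ℕ → M)
    {a b : ℕ} (ha : 0 < a) (hb : 0 < b) :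
    ∑ i ∈ range a, ∑ j ∈ range b, (if i + j = 0 then 0 else g i j) =
      ∑ i ∈ range a, ∑ j ∈ range b, g i j - g 0 0 := by
  have h : ∀ i j, (if i + j = 0 then 0 else g i j) =
      g i j - if i = 0 then if j = 0 then g 0 0 else 0 else 0 := by
    rintro (_ | i) (_ | j) <;> simp
  simp_rw [h, sum_sub_distrib]
  simp [ha, hb]

/-- If `α : ℕ → ℕ → ℚ` satisfies, for all `n ≥ 2` and `1 ≤ t ≤ n−1`,
`α n t = −∑_{(i,j)≠(0,0), 0≤i≤t−1, 0≤j≤n−t−1} α (n−i−j) (t−i) /((i+1)!·(j+1)!)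
  + 1/((t+1)!·(n−t+1)!) − 1/(n+1)!`,
then `α n t = B_n/n!` for all such `n, t`. -/
theorem stmt_11 (α : ℕ → ℕ → ℚ)
    (hα : ∀ n t : ℕ, 2 ≤ n → 1 ≤ t → t ≤ n - 1 →
      α n t = -(∑ i ∈ Finset.range t, ∑ j ∈ Finset.range (n - t),
          if i + j = 0 then 0
          else α (n - i - j) (t - i) / (((i + 1).factorial : ℚ) * ((j + 1).factorial : ℚ)))
        + 1 / (((t + 1).factorial : ℚ) * ((n - t + 1).factorial : ℚ))
        - 1 / ((n + 1).factorial : ℚ)) :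
    ∀ n t : ℕ, 2 ≤ n → 1 ≤ t → t ≤ n - 1 →
      α n t = bernoulli n / (n.factorial : ℚ) := by
  intro n
  induction n using Nat.strong_induction_on with
  | _ n ih =>
  intro t hn ht1 ht2
  have hterm : ∀ i ∈ range t, ∀ j ∈ range (n - t), i + j ≠ 0 →
      α (n - i - j) (t - i) / (((i + 1)! : ℚ) * (j + 1)!) = β (n - i - j) * ε i * ε j := by
    intro i hi j hj hij
    rw [mem_range] at hi hj
    rw [ih (n - i - j) (by omega) (t - i) (by omega) (by omega) (by omega)]
    simp only [bernoulliCoeff, expSubOneDivXCoeff]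
    ring
  obtain ⟨s, rfl⟩ := Nat.exists_eq_add_of_le (show t ≤ n by omega)
  rw [Nat.add_sub_cancel_left] at hterm
  rw [hα _ t hn ht1 ht2, Nat.add_sub_cancel_left,
    sum_congr rfl fun i hi => sum_congr rfl fun j hj =>
      ite_congr rfl (fun _ => rfl) (hterm i hi j hj),
    sum_range_sum_range_ite_add_eq_zero _ (by omega) (by omega),
    sum_range_sum_range_bernoulliCoeff_mul]
  simp only [bernoulliCoeff, expSubOneDivXCoeff, Nat.sub_zero]
  push_cast
  ring
end

section
/- Define rational numbers δ'_n for n ≥ 4 by the recurrence δ'_n = −∑_{i=1}^{n−4} δ'_{n−i}/(i+1)! − 1/(4·(n−1)!) + 1/n! − 1/(2^{n−1}·n!). Then δ'_n = (B_n/n!)·(4 − 1/2^{n−2}) for all n ≥ 4, where B_n is the n-th Bernoulli number. -/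
/-!
Write `bⱼ = Bⱼ / j!`. Faulhaber's formula `∑_{k<c} kᵖ = ∑ᵢ Bᵢ C(p+1,i) c^(p+1-i) / (p+1)` says that
the convolution of `bⱼ` with `cᵏ / k!` has `(p+1)`-st entry `∑_{k<c} kᵖ / p!`; for `c = 1` and
`c = 2` this gives `∑ⱼ bⱼ / (n+1-j)! = 0` and `∑ⱼ bⱼ 2⁻ʲ / (n+1-j)! = 1 / (2ⁿ⁺¹ n!)` for `n ≥ 1`.
Hence `fⱼ = bⱼ (4 - 4 / 2ʲ)` satisfies `∑_{j ≤ n} fⱼ / (n+1-j)! = -2 / (2ⁿ n!)`. Since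
`f₀ = f₃ = 0`, `f₁ = -1` and `f₂ = 1/4`, separating the terms `j ∈ {0, 1, 2, 3, n}` turns this into
the recurrence defining `δ'`, and strong induction gives `δ'ₙ = fₙ` for `n ≥ 4`.
-/

open Finset

theorem sum_bernoulli_div_factorial_mul_pow (c p : ℕ) :
    ∑ i ∈ range (p + 1), bernoulli i / i.factorial * (c : ℚ) ^ (p + 1 - i) / (p + 1 - i).factorial
      = (∑ k ∈ range c, (k : ℚ) ^ p) / p.factorial := by
  rw [sum_range_pow, sum_div]
  refine sum_congr rfl fun i hi => ?_
  rw [Nat.cast_choose ℚ (mem_range.1 hi).le, Nat.factorial_succ]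
  push_cast
  field_simp

theorem sum_bernoulli_div_factorial {n : ℕ} (hn : n ≠ 0) :
    ∑ j ∈ range (n + 1), bernoulli j / j.factorial / (n + 1 - j).factorial = 0 := by
  simpa [hn] using sum_bernoulli_div_factorial_mul_pow 1 n

theorem sum_bernoulli_div_factorial_div_two_pow {n : ℕ} (hn : n ≠ 0) :
    ∑ j ∈ range (n + 1), bernoulli j / j.factorial / 2 ^ j / (n + 1 - j).factorial
      = 1 / (2 ^ (n + 1) * n.factorial) := by
  have hpow : ∑ k ∈ range 2, (k : ℚ) ^ n = 1 := by simp [sum_range_succ, hn]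
  have h := sum_bernoulli_div_factorial_mul_pow 2 n
  rw [hpow, ← div_left_inj' (pow_ne_zero (n + 1) (two_ne_zero' ℚ)), sum_div] at h
  rw [mul_comm, ← div_div, ← h]
  refine sum_congr rfl fun j hj => ?_
  rw [Nat.cast_ofNat, pow_sub₀ _ two_ne_zero (mem_range.1 hj).le]
  field_simp

/-- `4 - 4 / 2 ^ n` rather than the statement's `4 - 1 / 2 ^ (n - 2)`: the two agree for `n ≥ 2`,
but only the former gives the right values `f₀ = 0`, `f₁ = -1` used in the convolution identity. -/
def bernoulliDelta (n : ℕ) : ℚ :=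
  bernoulli n / n.factorial * (4 - 4 / 2 ^ n)

theorem bernoulliDelta_eq {n : ℕ} (hn : 2 ≤ n) :
    bernoulliDelta n = bernoulli n / n.factorial * (4 - 1 / 2 ^ (n - 2)) := by
  obtain ⟨k, rfl⟩ := Nat.exists_eq_add_of_le' hn
  rw [bernoulliDelta, Nat.add_sub_cancel, pow_add]
  congr 1
  field_simp
  ring

theorem sum_bernoulliDelta_div_factorial {n : ℕ} (hn : n ≠ 0) :
    ∑ j ∈ range (n + 1), bernoulliDelta j / (n + 1 - j).factorial = -2 / (2 ^ n * n.factorial) := by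
  have hsplit : ∀ j, bernoulliDelta j / (n + 1 - j).factorial =
      4 * (bernoulli j / j.factorial / (n + 1 - j).factorial)
        - 4 * (bernoulli j / j.factorial / 2 ^ j / (n + 1 - j).factorial) := fun j => by
    rw [bernoulliDelta]
    ring
  simp only [hsplit, sum_sub_distrib, ← mul_sum, sum_bernoulli_div_factorial hn,
    sum_bernoulli_div_factorial_div_two_pow hn, pow_succ]
  field_simp
  ring

theorem sum_bernoulliDelta_sub_div_factorial {n : ℕ} (hn : n ≠ 0) :
    ∑ i ∈ range (n + 1), bernoulliDelta (n - i) / (i + 1).factorial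
      = -2 / (2 ^ n * n.factorial) := by
  rw [← sum_bernoulliDelta_div_factorial hn, ← sum_range_reflect]
  refine sum_congr rfl fun i hi => ?_
  have hi := mem_range.1 hi
  rw [show n + 1 - 1 - i = n - i by omega, show n - (n - i) = i by omega,
    show n - i + 1 = n + 1 - i by omega]

theorem bernoulliDelta_zero : bernoulliDelta 0 = 0 := by norm_num [bernoulliDelta]

theorem bernoulliDelta_one : bernoulliDelta 1 = -1 := by norm_num [bernoulliDelta]

theorem bernoulliDelta_two : bernoulliDelta 2 = 1 / 4 := by norm_num [bernoulliDelta, bernoulli]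

theorem bernoulliDelta_three : bernoulliDelta 3 = 0 := by norm_num [bernoulliDelta, bernoulli]

theorem bernoulliDelta_recurrence {n : ℕ} (hn : 4 ≤ n) :
    bernoulliDelta n = -∑ i ∈ Icc 1 (n - 4), bernoulliDelta (n - i) / (i + 1).factorial
      - 1 / (4 * (n - 1).factorial) + 1 / n.factorial - 1 / (2 ^ (n - 1) * n.factorial) := by
  obtain ⟨m, rfl⟩ := Nat.exists_eq_add_of_le' hn
  have h := sum_bernoulliDelta_sub_div_factorial (n := m + 4) (by omega)
  rw [sum_range_succ, sum_range_succ, sum_range_succ, sum_range_succ, range_eq_Ico,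
    sum_eq_sum_Ico_succ_bot (by omega), zero_add, Ico_add_one_right_eq_Icc, Nat.sub_zero] at h
  rw [show m + 4 - (m + 1) = 3 by omega, show m + 4 - (m + 2) = 2 by omega,
    show m + 4 - (m + 3) = 1 by omega, Nat.sub_self, bernoulliDelta_zero, bernoulliDelta_one,
    bernoulliDelta_two, bernoulliDelta_three] at h
  rw [Nat.factorial_one, show m + 4 = m + 3 + 1 by omega, pow_succ, Nat.factorial_succ (m + 3)] at h
  simp only [Nat.add_sub_cancel, show m + 4 - 1 = m + 3 by omega, Nat.factorial_succ (m + 3)]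
  linear_combination h

/-- If `δ' : ℕ → ℚ` satisfies, for all `n ≥ 4`,
`δ'_n = −∑_{i=1}^{n−4} δ'_{n−i}/(i+1)! − 1/(4·(n−1)!) + 1/n! − 1/(2^{n−1}·n!)`,
then `δ'_n = (B_n/n!)·(4 − 1/2^{n−2})` for all `n ≥ 4`. -/
theorem stmt_12 (δ : ℕ → ℚ)
    (hδ : ∀ n, 4 ≤ n →
      δ n = -∑ i ∈ Finset.Icc 1 (n - 4), δ (n - i) / ((i + 1).factorial : ℚ)
        - 1 / (4 * ((n - 1).factorial : ℚ)) + 1 / (n.factorial : ℚ)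
        - 1 / ((2 : ℚ) ^ (n - 1) * (n.factorial : ℚ))) :
    ∀ n, 4 ≤ n →
      δ n = bernoulli n / (n.factorial : ℚ) * (4 - 1 / (2 : ℚ) ^ (n - 2)) := by
  intro n hn
  rw [← bernoulliDelta_eq (by omega)]
  induction n using Nat.strong_induction_on with
  | _ n ih =>
    have hsmaller : ∀ i ∈ Icc 1 (n - 4), δ (n - i) = bernoulliDelta (n - i) := fun i hi => by
      have hi := mem_Icc.1 hi
      exact ih (n - i) (by omega) (by omega)
    rw [hδ n hn, bernoulliDelta_recurrence hn, sum_congr rfl fun i hi => by rw [hsmaller i hi]]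
end
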